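/- arXiv:2009.09735 — 7 statements merged into one kernel-verified Lean document; each statement's English description precedes it below -/
import Mathlib

section
/- Let F be a free group, H a finitely generated subgroup of F of rank n, f a nonidentity element of F, and m a positive integer such that f^m ∈ H. Then the subgroup K of F generated by H together with f has rank at most n. -/
/-!
By Nielsen–Schreier `K` is free, say on a basis `X`. Abelianizing and tensoring with `ℚ` gives
`χ : K → ℚ^(X)`. The image of `H` spans a subspace `W` of dimension at most `rank H`, and
`m • χ f = χ (f ^ m) ∈ W` forces `χ f ∈ W`, so `χ K ⊆ W`. As `χ K` contains the standard basis
of `ℚ^(X)`, this gives `|X| ≤ rank H`, while `X` generates `K`.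
-/

open Subgroup Submodule

theorem FreeGroup.rank_le_card (α : Type*) [Finite α] :
    Group.rank (FreeGroup α) ≤ Nat.card α := by
  classical
  have := Fintype.ofFinite α
  calc Group.rank (FreeGroup α) ≤ (Finset.univ.image (of : α → FreeGroup α)).card :=
        Group.rank_le (by simp [FreeGroup.closure_range_of])
    _ ≤ Finset.univ.card := Finset.card_image_le
    _ = Nat.card α := by rw [Finset.card_univ, Nat.card_eq_fintype_card]

theorem IsFreeGroup.rank_le_card_generators (G : Type*) [Group G] [IsFreeGroup G] [Group.FG G]
    [Finite (IsFreeGroup.Generators G)] : Group.rank G ≤ Nat.card (IsFreeGroup.Generators G) :=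
  (Group.rank_le_of_surjective (IsFreeGroup.mulEquiv G).toMonoidHom
    (IsFreeGroup.mulEquiv G).surjective).trans (FreeGroup.rank_le_card _)

theorem MonoidHom.rank_span_range_le {G R V : Type*} [Group G] [Group.FG G] [DivisionRing R]
    [AddCommGroup V] [Module R V] (χ : G →* Multiplicative V) :
    Module.rank R (span R (Set.range fun g => (χ g).toAdd)) ≤ Group.rank G := by
  classical
  obtain ⟨S, hcard, hS⟩ := Group.rank_spec G
  set T : Finset V := S.image fun g => (χ g).toAdd
  have hspan : span R (Set.range fun g => (χ g).toAdd) = span R T := by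
    refine le_antisymm (span_le.2 ?_) (span_mono (by simp [T]))
    rintro _ ⟨g, rfl⟩
    have hS_le : closure (S : Set G) ≤
        (AddSubgroup.toSubgroup (span R (T : Set V)).toAddSubgroup).comap χ :=
      (closure_le _).2 fun s hs => subset_span (Finset.mem_image_of_mem _ hs)
    exact hS_le (hS ▸ mem_top g)
  calc Module.rank R (span R (Set.range fun g => (χ g).toAdd))
        = Module.rank R (span R (T : Set V)) := by rw [hspan]
    _ ≤ T.card := rank_span_finset_le T
    _ ≤ Group.rank G := by exact_mod_cast hcard ▸ Finset.card_image_le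

theorem IsFreeGroup.rank_le_of_pow_mem {G : Type*} [Group G] [IsFreeGroup G] [Group.FG G]
    (H : Subgroup G) [Group.FG H] {g : G} {m : ℕ} (hm : m ≠ 0) (hgm : g ^ m ∈ H)
    (hsup : H ⊔ closure {g} = ⊤) : Group.rank G ≤ Group.rank H := by
  set χ : G →* Multiplicative (Generators G →₀ ℚ) :=
    lift fun i => .ofAdd (Finsupp.single i 1)
  set W := span ℚ (Set.range fun h : H => (χ h).toAdd)
  set P := (AddSubgroup.toSubgroup W.toAddSubgroup).comap χ
  have hHP : H ≤ P := fun h hh => subset_span ⟨⟨h, hh⟩, rfl⟩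
  have hgP : g ∈ P := by
    have : m • (χ g).toAdd ∈ W := by simpa [P] using hHP hgm
    rwa [← Nat.cast_smul_eq_nsmul ℚ, W.smul_mem_iff (by exact_mod_cast hm)] at this
  have hP : P = ⊤ :=
    top_le_iff.1 (hsup ▸ sup_le hHP ((closure_le _).2 (Set.singleton_subset_iff.2 hgP)))
  have hW : W = ⊤ := by
    rw [eq_top_iff, ← Finsupp.basisSingleOne.span_eq, span_le]
    rintro _ ⟨i, rfl⟩
    have : of i ∈ P := hP ▸ mem_top (of i)
    simpa [P, χ] using this
  have hcard : Cardinal.mk (Generators G) ≤ Group.rank H :=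
    calc Cardinal.mk (Generators G) = Module.rank ℚ (Generators G →₀ ℚ) := by simp
      _ = Module.rank ℚ W := by rw [hW, rank_top]
      _ ≤ Group.rank H := (χ.comp H.subtype).rank_span_range_le
  have : Finite (Generators G) :=
    Cardinal.lt_aleph0_iff_finite.1 (hcard.trans_lt Cardinal.natCast_lt_aleph0)
  refine (rank_le_card_generators G).trans ?_
  exact_mod_cast (Nat.cast_card (α := Generators G)).trans_le hcard

theorem rank_sup_root_le_general {α : Type*} (H : Subgroup (FreeGroup α)) [Group.FG H]
    (n : ℕ) (hn : Group.rank H = n) (f : FreeGroup α)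
    (m : ℕ) (hm : 0 < m) (hfm : f ^ m ∈ H)
    (K : Subgroup (FreeGroup α)) (hK : K = H ⊔ Subgroup.closure {f})
    [Group.FG K] : Group.rank K ≤ n := by
  subst hK hn
  have hHK : H ≤ H ⊔ closure {f} := le_sup_left
  have hfK : f ∈ H ⊔ closure {f} := le_sup_right (a := H) (mem_closure_singleton_self f)
  have : Group.FG (H.subgroupOf (H ⊔ closure {f})) :=
    Group.fg_of_surjective (f := (subgroupOfEquivOfLe hHK).symm.toMonoidHom) (MulEquiv.surjective _)
  rw [← Group.rank_congr (subgroupOfEquivOfLe hHK)]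
  -- `↥(H ⊔ closure {f})` is free by the Nielsen–Schreier instance `subgroupIsFreeOfIsFree`.
  refine IsFreeGroup.rank_le_of_pow_mem _ (g := ⟨f, hfK⟩) hm.ne' (by simpa [mem_subgroupOf]) ?_
  apply map_injective (subtype_injective _)
  simp [Subgroup.map_sup, subgroupOf_map_subtype, MonoidHom.map_closure, hHK,
    ← MonoidHom.range_eq_map]

theorem rank_sup_root_le {α : Type*} (H : Subgroup (FreeGroup α)) [Group.FG H]
    (n : ℕ) (hn : Group.rank H = n) (f : FreeGroup α) (hf : f ≠ 1)
    (m : ℕ) (hm : 0 < m) (hfm : f ^ m ∈ H)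
    (K : Subgroup (FreeGroup α)) (hK : K = H ⊔ Subgroup.closure {f})
    [Group.FG K] : Group.rank K ≤ n :=
  rank_sup_root_le_general H n hn f m hm hfm K hK
end

section
/- Every free group of finite rank is Hopfian: every surjective endomorphism of a finitely generated free group is injective. -/
/-!
A free group is residually finite: for a reduced word `w = x₁ ⋯ xₙ`, let each
generator act on the positions `0, …, n` by moving across the letters of `w` equal to it or to its
inverse; reducedness makes these partial bijections, which extend to permutations under which `w`
carries `n` to `0`. By Mal'cev's argument a finitely generated residually finite group `G` is
Hopfian: if `φ` is a surjective endomorphism, precomposition with `φ` is injective, hence bijective,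
on the finite set `Hom(G, Q)` for each finite `Q`, so every map to a finite group factors through
`φ` and kills `ker φ`.
-/

open Function

theorem Equiv.Perm.exists_forall_rel_apply_eq {α : Type*} [Finite α] {R : α → α → Prop}
    (hR : Relator.RightUnique R) (hL : Relator.LeftUnique R) :
    ∃ σ : Equiv.Perm α, ∀ x y, R x y → σ x = y := by
  classical
  have := Fintype.ofFinite α
  let f : α → α := fun x => if h : ∃ y, R x y then h.choose else x
  have hf : ∀ x y, R x y → f x = y := fun x y hxy => by
    have h : ∃ y, R x y := ⟨y, hxy⟩
    simp only [f, dif_pos h]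
    exact hR h.choose_spec hxy
  have hinj : Set.InjOn f {x | ∃ y, R x y} := by
    rintro x ⟨y, hxy⟩ x' ⟨y', hxy'⟩ hff
    rw [hf x y hxy, hf x' y' hxy'] at hff
    exact hL hxy (hff ▸ hxy')
  obtain ⟨g, hg⟩ := Set.MapsTo.exists_equiv_extend_of_card_eq (t := Finset.univ)
    Finset.card_univ.symm (fun x _ => Finset.mem_coe.mpr (Finset.mem_univ (f x))) hinj
  exact ⟨g.trans (Equiv.subtypeUnivEquiv Finset.mem_univ), fun x y hxy => by
    simpa [hf x y hxy] using hg x ⟨y, hxy⟩⟩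

section Hopfian

variable {G H : Type*} [Group G] [Group H]

instance MonoidHom.finite_of_fg [Group.FG G] [Finite H] : Finite (G →* H) := by
  obtain ⟨S, hS, hSfin⟩ := Group.fg_iff.mp ‹_›
  have := hSfin.to_subtype
  exact Finite.of_injective (fun f : G →* H => fun s : S => f s)
    fun f g hfg => MonoidHom.eq_of_eqOn_dense hS fun s hs => congrFun hfg ⟨s, hs⟩

theorem MonoidHom.exists_comp_eq_of_surjective [Group.FG G] [Finite H] {φ : G →* G}
    (hφ : Surjective φ) (ψ : G →* H) : ∃ τ : G →* H, τ.comp φ = ψ :=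
  Finite.injective_iff_surjective.mp (fun _ _ => (MonoidHom.cancel_right hφ).mp) ψ

theorem Group.ResiduallyFinite.injective_of_surjective [Group.FG G] [Group.ResiduallyFinite G]
    {φ : G →* G} (hφ : Surjective φ) : Injective φ := by
  refine (injective_iff_map_eq_one φ).mpr fun w hw => eq_one_iff_forall_finiteIndexNormalSubroup w
    fun N => ?_
  obtain ⟨τ, hτ⟩ := MonoidHom.exists_comp_eq_of_surjective hφ (QuotientGroup.mk' N.toSubgroup)
  rw [← FiniteIndexNormalSubgroup.mem_toSubgroup_iff, ← QuotientGroup.eq_one_iff,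
    ← QuotientGroup.mk'_apply, ← hτ, MonoidHom.comp_apply, hw, map_one]

end Hopfian

namespace FreeGroup

variable {α : Type*} {L : List (α × Bool)}

theorem IsReduced.eq_of_getElem?_succ (h : IsReduced L) {k : ℕ} {a : α} {b b' : Bool}
    (hk : L[k]? = some (a, b)) (hk' : L[k + 1]? = some (a, b')) : b = b' := by
  obtain ⟨hlt, hk'⟩ := List.getElem?_eq_some_iff.mp hk'
  rw [List.getElem?_eq_getElem (by omega), Option.some_inj] at hk
  simpa [hk, hk'] using List.isChain_iff_getElem.mp h k hlt

/-- How the generator `a` moves the positions `0, …, |L|` of the word `L`: `k + 1 ↦ k` if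
`L[k] = a`, and `k ↦ k + 1` if `L[k] = a⁻¹`. -/
def wordStep (L : List (α × Bool)) (a : α) (i j : ℕ) : Prop :=
  (i = j + 1 ∧ L[j]? = some (a, true)) ∨ (j = i + 1 ∧ L[i]? = some (a, false))

theorem IsReduced.rightUnique_wordStep (h : IsReduced L) (a : α) :
    Relator.RightUnique (wordStep L a) := by
  rintro i j j' (⟨rfl, hj⟩ | ⟨rfl, hi⟩) (⟨hij', hj'⟩ | ⟨rfl, hi'⟩)
  · omega
  · exact nomatch h.eq_of_getElem?_succ hj hi'
  · subst hij'
    exact nomatch h.eq_of_getElem?_succ hj' hi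
  · rfl

theorem IsReduced.leftUnique_wordStep (h : IsReduced L) (a : α) :
    Relator.LeftUnique (wordStep L a) := by
  rintro i i' j (⟨rfl, hj⟩ | ⟨rfl, hi⟩) (⟨rfl, hj'⟩ | ⟨hij', hi'⟩)
  · rfl
  · subst hij'
    exact nomatch h.eq_of_getElem?_succ hi' hj
  · exact nomatch h.eq_of_getElem?_succ hi hj'
  · omega

theorem IsReduced.exists_perm_wordStep (h : IsReduced L) :
    ∃ σ : α → Equiv.Perm (Fin (L.length + 1)),
      ∀ a (i j : Fin (L.length + 1)), wordStep L a i j → σ a i = j := by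
  choose σ hσ using fun a => Equiv.Perm.exists_forall_rel_apply_eq
    (R := fun i j : Fin (L.length + 1) => wordStep L a i j)
    (fun _ _ _ hj hj' => Fin.ext (h.rightUnique_wordStep a hj hj'))
    (fun _ _ _ hi hi' => Fin.ext (h.leftUnique_wordStep a hi hi'))
  exact ⟨σ, hσ⟩

theorem prod_map_take_apply_eq_zero {σ : α → Equiv.Perm (Fin (L.length + 1))}
    (hσ : ∀ a (i j : Fin (L.length + 1)), wordStep L a i j → σ a i = j) :
    ∀ k (hk : k ≤ L.length),
      ((L.take k).map fun x => cond x.2 (σ x.1) (σ x.1)⁻¹).prod ⟨k, by omega⟩ = 0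
  | 0, _ => rfl
  | k + 1, hk => by
    obtain ⟨⟨a, b⟩, hL⟩ : ∃ x, L[k]? = some x := ⟨L[k], List.getElem?_eq_getElem (by omega)⟩
    have hstep : cond b (σ a) (σ a)⁻¹ ⟨k + 1, by omega⟩ = ⟨k, by omega⟩ := by
      cases b
      · exact Equiv.Perm.inv_eq_iff_eq.mpr (hσ a ⟨k, _⟩ ⟨k + 1, _⟩ (Or.inr ⟨rfl, hL⟩)).symm
      · exact hσ a ⟨k + 1, _⟩ ⟨k, _⟩ (Or.inl ⟨rfl, hL⟩)
    rw [List.take_add_one, hL, Option.toList_some, List.map_append, List.prod_append,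
      Equiv.Perm.mul_apply, List.map_singleton, List.prod_singleton, hstep]
    exact prod_map_take_apply_eq_zero hσ k (by omega)

theorem IsReduced.exists_lift_mk_ne_one (h : IsReduced L) (hL : L ≠ []) :
    ∃ σ : α → Equiv.Perm (Fin (L.length + 1)), lift σ (mk L) ≠ 1 := by
  obtain ⟨σ, hσ⟩ := h.exists_perm_wordStep
  refine ⟨σ, fun h1 => hL (List.length_eq_zero_iff.mp ?_)⟩
  have := prod_map_take_apply_eq_zero hσ L.length le_rfl
  rw [List.take_length, ← lift_mk, h1] at this
  exact Fin.mk.inj_iff.mp this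

instance : Group.ResiduallyFinite (FreeGroup α) := by
  classical
  refine Group.residuallyFinite_of_forall_exists_finite_monoidHom fun w hw => ?_
  obtain ⟨σ, hσ⟩ := isReduced_toWord.exists_lift_mk_ne_one (toWord_eq_nil_iff.not.mpr hw)
  exact ⟨_, _, inferInstance, lift σ, by rwa [mk_toWord] at hσ⟩

end FreeGroup

theorem freeGroup_hopfian {α : Type*} [Finite α]
    (φ : FreeGroup α →* FreeGroup α) (hφ : Function.Surjective φ) :
    Function.Injective φ :=
  Group.ResiduallyFinite.injective_of_surjective hφ
end

section
/- If H₁ ⊆ H₂ ⊆ ⋯ is an ascending chain of subgroups of a free group F, each of rank at most r, then the chain stabilizes: there exists N such that H_i = H_N for all i ≥ N (Takahasi's theorem). -/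
/-!
The union `U` of the chain is a subgroup of a free group, hence free (Nielsen–Schreier). If `U`
has a finite basis, it is finitely generated; its finitely many generators already lie in some
`H N`, and the chain is constant from `N` on. If the basis is infinite, `r + 1` basis elements lie
in some `H N`. Sending them to the standard basis of `ℤ^(r+1)` and all other basis elements to `0`
gives a homomorphism on `H N` whose image spans `ℤ^(r+1)`, so `H N` needs at least `r + 1`
generators.
-/

namespace Subgroup

variable {G ι : Type*} [Group G] [Nonempty ι] {H : ι → Subgroup G}

lemma exists_subset_of_directed_of_finite (hH : Directed (· ≤ ·) H) {s : Set G}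
    (hs : s.Finite) (hsH : s ⊆ (⨆ i, H i : Subgroup G)) : ∃ i, s ⊆ H i := by
  rw [coe_iSup_of_directed hH, ← hs.coe_toFinset] at hsH
  rw [← hs.coe_toFinset]
  exact (directed_comp.2 hH).exists_mem_subset_of_finset_subset_biUnion hsH

lemma exists_eq_iSup_of_directed_of_fg (hH : Directed (· ≤ ·) H) (hfg : (⨆ i, H i).FG) :
    ∃ i, H i = ⨆ i, H i := by
  obtain ⟨S, hS⟩ := hfg
  obtain ⟨i, hi⟩ :=
    exists_subset_of_directed_of_finite hH S.finite_toSet (hS ▸ subset_closure)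
  exact ⟨i, le_antisymm (le_iSup H i) (hS ▸ (closure_le _).2 hi)⟩

end Subgroup

lemma Group.le_rank_of_forall_single_mem_range {G : Type*} [Group G] [Group.FG G] {n : ℕ}
    (f : G →* Multiplicative (Fin n → ℤ))
    (hf : ∀ j, Multiplicative.ofAdd (Pi.single j 1) ∈ f.range) : n ≤ Group.rank G := by
  obtain ⟨S, hcard, hS⟩ := Group.rank_spec G
  set T : Finset (Fin n → ℤ) := S.image (Multiplicative.toAdd ∘ f)
  have hrange : f.range = Subgroup.closure (f '' S) := by
    rw [← MonoidHom.map_closure, hS, MonoidHom.range_eq_map]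
  have hsingle (j : Fin n) : Pi.single j 1 ∈ Submodule.span ℤ (T : Set (Fin n → ℤ)) := by
    rw [← Submodule.mem_toAddSubgroup, Submodule.span_int_eq_addSubgroupClosure]
    change Multiplicative.ofAdd _ ∈ (AddSubgroup.closure _).toSubgroup
    rw [AddSubgroup.toSubgroup_closure, Finset.coe_image, Set.image_comp,
      Set.preimage_image_eq _ Multiplicative.toAdd.injective, ← hrange]
    exact hf j
  have hspan : Submodule.span ℤ (T : Set (Fin n → ℤ)) = ⊤ := by
    refine eq_top_iff.2 ?_
    rw [← (Pi.basisFun ℤ (Fin n)).span_eq, Submodule.span_le]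
    rintro _ ⟨j, rfl⟩
    simpa using hsingle j
  calc n = Module.finrank ℤ (⊤ : Submodule ℤ (Fin n → ℤ)) := by simp
    _ ≤ T.card := hspan ▸ finrank_span_finset_le_card T
    _ ≤ S.card := Finset.card_image_le
    _ = Group.rank G := hcard

lemma FreeGroupBasis.le_rank_of_mem_range {ι G K : Type*} [Group G] [Group K] [Group.FG K]
    (b : FreeGroupBasis ι G) {n : ℕ} (e : Fin n ↪ ι) (ψ : K →* G)
    (hψ : ∀ j, b (e j) ∈ ψ.range) : n ≤ Group.rank K := by
  classical
  let φ : G →* Multiplicative (Fin n → ℤ) :=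
    b.lift fun i ↦ Multiplicative.ofAdd fun k ↦ if e k = i then 1 else 0
  refine Group.le_rank_of_forall_single_mem_range (φ.comp ψ) fun j ↦ ?_
  obtain ⟨x, hx⟩ := hψ j
  refine ⟨x, ?_⟩
  rw [MonoidHom.comp_apply, hx, b.lift_apply_apply, b.repr_apply_coe,
    FreeGroup.lift_apply_of]
  congr 1
  ext k
  simp [e.injective.eq_iff, Pi.single_apply]

theorem takahasi {α : Type*} (r : ℕ) (H : ℕ → Subgroup (FreeGroup α))
    (hmono : Monotone H) [∀ i, Group.FG (H i)]
    (hrank : ∀ i, Group.rank (H i) ≤ r) :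
    ∃ N, ∀ i, N ≤ i → H i = H N := by
  obtain ⟨ι, ⟨b⟩⟩ := IsFreeGroup.nonempty_basis (G := ↥(⨆ i, H i))
  rcases finite_or_infinite ι with hι | hι
  · have hfg : Group.FG ↥(⨆ i, H i) :=
      Group.fg_of_surjective (f := b.repr.symm.toMonoidHom) b.repr.symm.surjective
    obtain ⟨N, hN⟩ := Subgroup.exists_eq_iSup_of_directed_of_fg hmono.directed_le
      ((Group.fg_iff_subgroup_fg _).1 hfg)
    exact ⟨N, fun i hi ↦ le_antisymm (hN ▸ le_iSup H i) (hmono hi)⟩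
  · exfalso
    let e : Fin (r + 1) ↪ ι := Fin.valEmbedding.trans (Infinite.natEmbedding ι)
    obtain ⟨N, hN⟩ := Subgroup.exists_subset_of_directed_of_finite hmono.directed_le
      (Set.finite_range fun j ↦ (b (e j) : FreeGroup α))
      (Set.range_subset_iff.2 fun j ↦ (b (e j)).2)
    have hgen : r + 1 ≤ Group.rank (H N) :=
      b.le_rank_of_mem_range e (Subgroup.inclusion (le_iSup H N))
        fun j ↦ ⟨⟨_, hN ⟨j, rfl⟩⟩, rfl⟩
    exact absurd (hgen.trans (hrank N)) (by omega)
end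

section
/- For any free group F, any nonempty set π of primes, and any finitely generated subgroup H of F, the π-isolator I_π(H) of H in F is finitely generated; moreover its rank is at most the rank of H. -/
def IsPiNumber (π : Set ℕ) (m : ℕ) : Prop :=
  0 < m ∧ ∀ p : ℕ, p.Prime → p ∣ m → p ∈ π

def IsPiIsolated {G : Type*} [Group G] (π : Set ℕ) (K : Subgroup G) : Prop :=
  ∀ m : ℕ, IsPiNumber π m → ∀ g : G, g ^ m ∈ K → g ∈ K

def piIsolator {G : Type*} [Group G] (π : Set ℕ) (H : Subgroup G) : Subgroup G :=
  ⨅ (K : Subgroup G) (_ : IsPiIsolated π K ∧ H ≤ K), K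

/-!
A free group `U` with basis `(b i)` maps onto `ℚ^(ι)` by sending `b i` to the `i`-th unit
vector. If `U` is generated by a subgroup `⟨s⟩` together with elements having a positive power in
`⟨s⟩`, then `U` maps into the `ℚ`-span of the image of `s`, which has dimension at most `|s|`,
while the images of the basis elements are linearly independent; so `U` has rank at most `|s|`.
The same count shows that the union of a chain of subgroups of rank `≤ n` of a free group has
rank `≤ n`, since any finitely many basis elements of the union lie in one member of the chain.
By Zorn's lemma there is a maximal subgroup `M` with `H ≤ M ≤ I_π(H)` and rank at most
`rank H`; maximality makes `M` closed under roots inside `I_π(H)`, so `M` is `π`-isolated and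
hence `M = I_π(H)`.
-/

open Subgroup

namespace Subgroup

variable {G : Type*} [Group G]

def GeneratedByAtMost (n : ℕ) (K : Subgroup G) : Prop :=
  ∃ S : Finset G, closure (S : Set G) = K ∧ S.card ≤ n

lemma GeneratedByAtMost.of_top {U : Subgroup G} {n : ℕ}
    (h : (⊤ : Subgroup U).GeneratedByAtMost n) : U.GeneratedByAtMost n := by
  classical
  obtain ⟨S, hS, hcard⟩ := h
  refine ⟨S.image U.subtype, ?_, Finset.card_image_le.trans hcard⟩
  rw [Finset.coe_image, ← MonoidHom.map_closure, hS, ← MonoidHom.range_eq_map, range_subtype]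

lemma generatedByAtMost_rank (H : Subgroup G) [Group.FG H] :
    H.GeneratedByAtMost (Group.rank H) :=
  let ⟨S, hcard, hS⟩ := Group.rank_spec H
  .of_top ⟨S, hS, hcard.le⟩

lemma GeneratedByAtMost.exists_map_closure_eq {K U : Subgroup G} {n : ℕ}
    (hK : K.GeneratedByAtMost n) (hKU : K ≤ U) :
    ∃ s : Finset U, s.card ≤ n ∧ (closure (s : Set U)).map U.subtype = K := by
  classical
  obtain ⟨S, rfl, hcard⟩ := hK
  refine ⟨S.subtype (· ∈ U),
    (Finset.card_subtype _ _).trans_le ((Finset.card_filter_le _ _).trans hcard), ?_⟩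
  rw [MonoidHom.map_closure]
  congr 1
  ext x
  simpa using fun hx => hKU (subset_closure hx)

end Subgroup

namespace FreeGroupBasis

variable {ι G : Type*} [Group G] (b : FreeGroupBasis ι G)

/-- The rationalised abelianisation `G → G^ab ⊗ ℚ ≅ ℚ^(ι)`. -/
noncomputable def toRat : G →* Multiplicative (ι →₀ ℚ) :=
  (FreeGroup.lift fun i => Multiplicative.ofAdd (Finsupp.single i 1)).comp b.repr.toMonoidHom

@[simp]
lemma toRat_apply_self (i : ι) : b.toRat (b i) = .ofAdd (.single i 1) := by
  simp [toRat]

noncomputable def ratClosure (s : Set G) : Subgroup G :=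
  (Submodule.span ℚ (Multiplicative.toAdd ∘ b.toRat '' s)).toAddSubgroup.toSubgroup.comap b.toRat

lemma mem_ratClosure {s : Set G} {g : G} :
    g ∈ b.ratClosure s ↔
      (b.toRat g).toAdd ∈ Submodule.span ℚ (Multiplicative.toAdd ∘ b.toRat '' s) :=
  Iff.rfl

lemma closure_le_ratClosure (s : Set G) : closure s ≤ b.ratClosure s :=
  (closure_le _).2 fun x hx => Submodule.subset_span ⟨x, hx, rfl⟩

lemma mem_ratClosure_of_pow_mem {s : Set G} {g : G} {m : ℕ} (hm : m ≠ 0)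
    (h : g ^ m ∈ b.ratClosure s) : g ∈ b.ratClosure s := by
  rw [mem_ratClosure, map_pow, toAdd_pow, ← Nat.cast_smul_eq_nsmul ℚ] at h
  rw [mem_ratClosure]
  simpa [hm] using Submodule.smul_mem _ (m : ℚ)⁻¹ h

lemma card_le_of_forall_mem_ratClosure (s : Finset G) (T : Finset ι)
    (h : ∀ t ∈ T, b t ∈ b.ratClosure s) : T.card ≤ s.card := by
  classical
  set e : ι → ι →₀ ℚ := fun t => Finsupp.single t 1
  have hT : LinearIndepOn ℚ id (T.image e : Set (ι →₀ ℚ)) := by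
    rw [Finset.coe_image]
    exact ((Finsupp.linearIndependent_single_one ℚ ι).linearIndepOn _).id_image
  calc T.card = (T.image e).card :=
        (Finset.card_image_of_injective _ (Finsupp.single_left_injective one_ne_zero)).symm
    _ = Module.finrank ℚ (Submodule.span ℚ (T.image e : Set (ι →₀ ℚ))) :=
        (finrank_span_finset_eq_card hT).symm
    _ ≤ Module.finrank ℚ
          (Submodule.span ℚ (s.image (Multiplicative.toAdd ∘ b.toRat) : Set (ι →₀ ℚ))) := by
        apply Submodule.finrank_mono
        rw [Submodule.span_le, Finset.coe_image, Finset.coe_image]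
        rintro _ ⟨t, ht, rfl⟩
        simpa using b.mem_ratClosure.1 (h t ht)
    _ ≤ (s.image (Multiplicative.toAdd ∘ b.toRat)).card := finrank_span_finset_le_card _
    _ ≤ s.card := Finset.card_image_le

lemma closure_range_eq_top : closure (Set.range b) = ⊤ := by
  have : Set.range b = b.repr.symm '' Set.range FreeGroup.of := by
    rw [← Set.range_comp]
    congr 1
  rw [this, ← MulEquiv.coe_toMonoidHom, ← MonoidHom.map_closure, FreeGroup.closure_range_of,
    map_top_of_surjective _ b.repr.symm.surjective]

lemma generatedByAtMost_top_of_ratClosure {n : ℕ}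
    (h : ∀ T : Finset ι, ∃ s : Finset G, s.card ≤ n ∧ ∀ t ∈ T, b t ∈ b.ratClosure s) :
    (⊤ : Subgroup G).GeneratedByAtMost n := by
  classical
  have hcard (T : Finset ι) : T.card ≤ n := by
    obtain ⟨s, hs, hT⟩ := h T
    exact (b.card_le_of_forall_mem_ratClosure s T hT).trans hs
  have : Finite ι := by
    by_contra hι
    have : Infinite ι := not_finite_iff_infinite.mp hι
    obtain ⟨T, hT⟩ := Infinite.exists_subset_card_eq ι (n + 1)
    have := hcard T
    omega
  have := Fintype.ofFinite ι
  refine ⟨Finset.univ.image b, ?_, Finset.card_image_le.trans (hcard _)⟩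
  rw [Finset.coe_image, Finset.coe_univ, Set.image_univ, b.closure_range_eq_top]

end FreeGroupBasis

namespace Subgroup

variable {G : Type*} [Group G] [IsFreeGroup G] {n : ℕ}

lemma GeneratedByAtMost.sup_closure_singleton {K : Subgroup G} (hK : K.GeneratedByAtMost n)
    {g : G} {m : ℕ} (hm : m ≠ 0) (hg : g ^ m ∈ K) : (K ⊔ closure {g}).GeneratedByAtMost n := by
  set U := K ⊔ closure {g}
  obtain ⟨ι, ⟨b⟩⟩ := IsFreeGroup.nonempty_basis (G := U)
  obtain ⟨s, hs, hsK⟩ := hK.exists_map_closure_eq (le_sup_left : K ≤ U)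
  have hmem (x : U) : (x : G) ∈ (b.ratClosure s).map U.subtype ↔ x ∈ b.ratClosure s :=
    mem_map_iff_mem U.subtype_injective
  have hKR : K ≤ (b.ratClosure s).map U.subtype :=
    hsK.symm.le.trans (map_mono (b.closure_le_ratClosure _))
  have hgU : g ∈ U := mem_sup_right (mem_closure_singleton_self g)
  have hgR : (⟨g, hgU⟩ : U) ∈ b.ratClosure s :=
    b.mem_ratClosure_of_pow_mem hm ((hmem _).1 (hKR hg))
  have hUR : U ≤ (b.ratClosure s).map U.subtype :=
    sup_le hKR ((closure_le _).2 (by simpa using (hmem _).2 hgR))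
  exact .of_top (b.generatedByAtMost_top_of_ratClosure fun _ =>
    ⟨s, hs, fun t _ => (hmem _).1 (hUR (b t).2)⟩)

lemma generatedByAtMost_sSup_of_isChain {c : Set (Subgroup G)} (hne : c.Nonempty)
    (hc : IsChain (· ≤ ·) c) (h : ∀ K ∈ c, K.GeneratedByAtMost n) :
    (sSup c).GeneratedByAtMost n := by
  classical
  obtain ⟨ι, ⟨b⟩⟩ := IsFreeGroup.nonempty_basis (G := ↥(sSup c))
  refine .of_top (b.generatedByAtMost_top_of_ratClosure fun T => ?_)
  obtain ⟨K, hKc, hTK⟩ : ∃ K ∈ c, ((T.image fun t => (b t : G)) : Set G) ⊆ K := by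
    refine hc.directedOn.exists_mem_subset_of_finset_subset_biUnion hne ?_
    intro x hx
    obtain ⟨t, -, rfl⟩ := Finset.mem_image.1 hx
    simpa using (mem_sSup_of_directedOn hne hc.directedOn).1 (b t).2
  obtain ⟨s, hs, hsK⟩ := (h K hKc).exists_map_closure_eq (le_sSup hKc)
  refine ⟨s, hs, fun t ht => b.closure_le_ratClosure _ ?_⟩
  rw [← mem_map_iff_mem (sSup c).subtype_injective, hsK]
  exact hTK (Finset.mem_image_of_mem _ ht)

lemma exists_generatedByAtMost_forall_pow_mem {H I : Subgroup G} (hHI : H ≤ I)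
    (hH : H.GeneratedByAtMost n) :
    ∃ M, H ≤ M ∧ M ≤ I ∧ M.GeneratedByAtMost n ∧ ∀ m ≠ 0, ∀ g ∈ I, g ^ m ∈ M → g ∈ M := by
  obtain ⟨M, hHM, hM⟩ := zorn_le_nonempty₀ {K | K ≤ I ∧ K.GeneratedByAtMost n}
    (fun c hcC hc K hK => ⟨sSup c, ⟨sSup_le fun L hL => (hcC hL).1,
      generatedByAtMost_sSup_of_isChain ⟨K, hK⟩ hc fun L hL => (hcC hL).2⟩,
      fun _ => le_sSup⟩) H ⟨hHI, hH⟩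
  refine ⟨M, hHM, hM.prop.1, hM.prop.2, fun m hm g hgI hgM => ?_⟩
  have hle : M ⊔ closure {g} ≤ M :=
    hM.2 ⟨sup_le hM.prop.1 ((closure_le _).2 (by simpa using hgI)),
      hM.prop.2.sup_closure_singleton hm hgM⟩ le_sup_left
  exact hle (mem_sup_right (mem_closure_singleton_self g))

end Subgroup

section PiIsolator

variable {G : Type*} [Group G] (π : Set ℕ) (H : Subgroup G)

lemma le_piIsolator : H ≤ piIsolator π H :=
  le_iInf₂ fun _ hK => hK.2

lemma piIsolator_le {K : Subgroup G} (hK : IsPiIsolated π K) (hHK : H ≤ K) :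
    piIsolator π H ≤ K :=
  iInf₂_le K ⟨hK, hHK⟩

lemma isPiIsolated_piIsolator : IsPiIsolated π (piIsolator π H) := by
  intro m hm g hg
  simp only [piIsolator, mem_iInf] at hg ⊢
  exact fun K hK => hK.1 m hm g (hg K hK)

end PiIsolator

theorem piIsolator_fg_general {α : Type*} (π : Set ℕ)
    (H : Subgroup (FreeGroup α)) [Group.FG H] :
    ∃ S : Finset (FreeGroup α),
      Subgroup.closure (S : Set (FreeGroup α)) = piIsolator π H ∧
      S.card ≤ Group.rank H := by
  obtain ⟨M, hHM, hMI, ⟨S, hS, hcard⟩, hroot⟩ :=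
    exists_generatedByAtMost_forall_pow_mem (le_piIsolator π H) (generatedByAtMost_rank H)
  have hM : IsPiIsolated π M := fun m hm g hg =>
    hroot m hm.1.ne' g (isPiIsolated_piIsolator π H m hm g (hMI hg)) hg
  exact ⟨S, hS.trans (hMI.antisymm (piIsolator_le π H hM hHM)), hcard⟩

theorem piIsolator_fg {α : Type*} (π : Set ℕ) (hπ : π.Nonempty)
    (hπ' : ∀ p ∈ π, p.Prime) (H : Subgroup (FreeGroup α)) [Group.FG H] :
    ∃ S : Finset (FreeGroup α),
      Subgroup.closure (S : Set (FreeGroup α)) = piIsolator π H ∧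
      S.card ≤ Group.rank H :=
  piIsolator_fg_general π H
end

section
/- For any free group F and any finitely generated subgroup H of F, the isolator I(H) of H (the smallest isolated subgroup containing H) is finitely generated, with rank at most the rank of H. -/
def IsIsolated {G : Type*} [Group G] (K : Subgroup G) : Prop :=
  ∀ g : G, ∀ m : ℕ, 0 < m → g ^ m ∈ K → g ∈ K

def isolator {G : Type*} [Group G] (H : Subgroup G) : Subgroup G :=
  ⨅ (K : Subgroup G) (_ : IsIsolated K ∧ H ≤ K), K

/-!
The isolator `I` of `H` is a subgroup of a free group, hence free. Map `I` to the rational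
vector space on a basis of `I`. The preimage of the `ℚ`-span `V` of the image of a generating set
of `H` is isolated, since `V` is closed under division by positive integers, and it contains `H`;
so it contains `I`. Then the basis vectors, which are linearly independent, all lie in `V`, whose
dimension is at most `rank H`.
-/

section Isolated

variable {G : Type*} [Group G]

lemma IsIsolated.comap {G' : Type*} [Group G'] {K : Subgroup G'} (hK : IsIsolated K)
    (f : G →* G') : IsIsolated (K.comap f) :=
  fun g m hm hg => hK (f g) m hm (by simpa using hg)

lemma IsIsolated.map_subtype {I : Subgroup G} (hI : IsIsolated I) {L : Subgroup I}
    (hL : IsIsolated L) : IsIsolated (L.map I.subtype) := by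
  rintro g m hm ⟨x, hx, hxg⟩
  have hgI : g ∈ I := hI g m hm (hxg ▸ x.2)
  have hx' : x = ⟨g, hgI⟩ ^ m := Subtype.ext (by simpa using hxg)
  exact ⟨⟨g, hgI⟩, hL _ m hm (hx' ▸ hx), rfl⟩

lemma Submodule.isIsolated_toSubgroup {k M : Type*} [DivisionRing k] [CharZero k]
    [AddCommGroup M] [Module k M] (V : Submodule k M) :
    IsIsolated (AddSubgroup.toSubgroup V.toAddSubgroup) := by
  intro v m hm hv
  have hmv : (m : k) • Multiplicative.toAdd v ∈ V := by
    simpa [Nat.cast_smul_eq_nsmul] using hv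
  have hm0 : (m : k) ≠ 0 := Nat.cast_ne_zero.mpr hm.ne'
  simpa [inv_smul_smul₀ hm0] using V.smul_mem (m : k)⁻¹ hmv

lemma le_isolator (H : Subgroup G) : H ≤ isolator H :=
  le_iInf₂ fun _ hK => hK.2

lemma isIsolated_isolator (H : Subgroup G) : IsIsolated (isolator H) := by
  intro g m hm hg
  simp only [isolator, Subgroup.mem_iInf] at hg ⊢
  exact fun K hK => hK.1 g m hm (hg K hK)

lemma isolator_le {H K : Subgroup G} (hK : IsIsolated K) (hHK : H ≤ K) : isolator H ≤ K :=
  iInf₂_le K ⟨hK, hHK⟩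

lemma eq_top_of_comap_inclusion_isolator_eq_top {H : Subgroup G} {L : Subgroup (isolator H)}
    (hL : IsIsolated L) (hHL : L.comap (Subgroup.inclusion (le_isolator H)) = ⊤) : L = ⊤ := by
  have hHL' : H ≤ L.map (isolator H).subtype := fun h hh =>
    ⟨_, (Subgroup.eq_top_iff' _).mp hHL ⟨h, hh⟩, rfl⟩
  rw [eq_top_iff, ← Subgroup.map_subtype_le_map_subtype, ← MonoidHom.range_eq_map,
    Subgroup.range_subtype]
  exact isolator_le ((isIsolated_isolator H).map_subtype hL) hHL'

end Isolated

namespace IsFreeGroup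

variable {G : Type*} [Group G] [IsFreeGroup G]

lemma closure_range_of : Subgroup.closure (Set.range (of : Generators G → G)) = ⊤ := by
  have hof : (of : Generators G → G) = mulEquiv G ∘ FreeGroup.of := rfl
  rw [hof, Set.range_comp, ← MulEquiv.coe_toMonoidHom, ← MonoidHom.map_closure,
    FreeGroup.closure_range_of, ← MonoidHom.range_eq_map, MonoidHom.range_eq_top]
  exact (mulEquiv G).surjective

variable (G) in
noncomputable def ratAbelianization : G →* Multiplicative (Generators G →₀ ℚ) :=
  lift fun c => Multiplicative.ofAdd (Finsupp.single c 1)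

lemma exists_finset_closure_eq_top_of_le_span (s : Finset G)
    (hs : ∀ g : G, (ratAbelianization G g).toAdd ∈
      Submodule.span ℚ ((fun x => (ratAbelianization G x).toAdd) '' s)) :
    ∃ t : Finset G, Subgroup.closure (t : Set G) = ⊤ ∧ t.card ≤ s.card := by
  classical
  set w := s.image fun x => (ratAbelianization G x).toAdd
  have hind := Finsupp.linearIndependent_single_one ℚ (Generators G)
  have hrange : Set.range (fun c : Generators G => Finsupp.single c (1 : ℚ)) ≤
      Submodule.span ℚ (w : Set (Generators G →₀ ℚ)) := by
    rintro _ ⟨c, rfl⟩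
    simpa [w, ratAbelianization] using hs (of c)
  have : Finite (Generators G) := hind.finite_of_le_span_finite _ _ hrange
  have : Fintype (Generators G) := Fintype.ofFinite _
  have hcard := linearIndependent_le_span' _ hind _ hrange
  simp only [Cardinal.mk_fintype, Finset.coe_sort_coe, Fintype.card_coe, Nat.cast_le] at hcard
  refine ⟨Finset.univ.image of, ?_, ?_⟩
  · simpa using closure_range_of
  · calc (Finset.univ.image of).card ≤ Fintype.card (Generators G) := Finset.card_image_le
      _ ≤ w.card := hcard
      _ ≤ s.card := Finset.card_image_le

end IsFreeGroup

lemma Subgroup.closure_map_subtype_eq {G : Type*} [Group G] {I : Subgroup G} {t : Finset I}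
    (ht : Subgroup.closure (t : Set I) = ⊤) :
    Subgroup.closure (t.map (Function.Embedding.subtype _) : Set G) = I := by
  rw [Finset.coe_map, Function.Embedding.coe_subtype, ← I.coe_subtype, ← MonoidHom.map_closure,
    ht, ← MonoidHom.range_eq_map, Subgroup.range_subtype]

theorem isolator_fg {α : Type*} (H : Subgroup (FreeGroup α)) [Group.FG H] :
    ∃ S : Finset (FreeGroup α),
      Subgroup.closure (S : Set (FreeGroup α)) = isolator H ∧
      S.card ≤ Group.rank H := by
  classical
  set I := isolator H
  -- `I` is free by Nielsen–Schreier (`subgroupIsFreeOfIsFree`).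
  set ψ := IsFreeGroup.ratAbelianization I
  obtain ⟨T, hTcard, hT⟩ := Group.rank_spec H
  set s := T.image (Subgroup.inclusion (le_isolator H))
  set V := Submodule.span ℚ ((fun x => (ψ x).toAdd) '' s)
  set L := (AddSubgroup.toSubgroup V.toAddSubgroup).comap ψ
  have hL : L = ⊤ := by
    refine eq_top_of_comap_inclusion_isolator_eq_top (V.isIsolated_toSubgroup.comap ψ) ?_
    rw [eq_top_iff, ← hT, Subgroup.closure_le]
    intro t ht
    exact Submodule.subset_span ⟨_, Finset.mem_image_of_mem _ ht, rfl⟩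
  obtain ⟨t, ht, htcard⟩ :=
    IsFreeGroup.exists_finset_closure_eq_top_of_le_span s ((Subgroup.eq_top_iff' L).mp hL)
  refine ⟨t.map (Function.Embedding.subtype _), Subgroup.closure_map_subtype_eq ht, ?_⟩
  calc (t.map _).card = t.card := Finset.card_map _
    _ ≤ s.card := htcard
    _ ≤ T.card := Finset.card_image_le
    _ = Group.rank H := hTcard
end

section
/- Every strictly increasing chain of finitely generated subgroups H₁ < H₂ < ⋯ of a free group F must have unbounded ranks: for every r there exists i with rank(H_i) > r, provided the chain is infinite. -/
/-!
Suppose all `H i` had rank at most `r`. The union `L` of the chain is a subgroup of a free group,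
hence free (Nielsen–Schreier). It is not finitely generated, since finitely many generators
would already lie in a single `H i`; so `L` has infinitely many basis elements. Some `H N`
contains `r + 1` of them, and killing all other basis elements of `L` maps `H N` onto
`(ℤ/2)^(r+1)`, a group of rank `r + 1`.
-/

open Function

namespace Subgroup

variable {G : Type*} [Group G]

theorem exists_subset_of_directed_of_subset_iSup {ι : Type*} [Nonempty ι] {H : ι → Subgroup G}
    (hH : Directed (· ≤ ·) H) {s : Set G} (hs : s.Finite) (hsH : s ⊆ ↑(⨆ i, H i)) :
    ∃ i, s ⊆ H i := by
  classical
  have hmem (x : s) : ∃ i, (x : G) ∈ H i := (mem_iSup_of_directed hH).mp (hsH x.2)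
  choose j hj using hmem
  have := hs.fintype
  obtain ⟨i, hi⟩ := hH.finset_le (Finset.univ.image j)
  exact ⟨i, fun x hx => hi _ (Finset.mem_image_of_mem j (Finset.mem_univ ⟨x, hx⟩)) (hj ⟨x, hx⟩)⟩

theorem not_fg_iSup_of_strictMono {ι : Type*} [PartialOrder ι] [IsDirectedOrder ι] [NoMaxOrder ι]
    [Nonempty ι] {H : ι → Subgroup G} (hH : StrictMono H) : ¬ (⨆ i, H i).FG := by
  rintro ⟨S, hS⟩
  obtain ⟨i, hi⟩ := exists_subset_of_directed_of_subset_iSup hH.monotone.directed_le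
    S.finite_toSet (hS ▸ subset_closure)
  obtain ⟨j, hij⟩ := exists_gt i
  have : H j ≤ H i := (le_iSup H j).trans (hS ▸ (closure_le _).mpr hi)
  exact (hH hij).not_ge this

end Subgroup

theorem Multiplicative.closure_range_ofAdd_single_one {ι : Type*} [Fintype ι] [DecidableEq ι]
    (n : ℕ) [NeZero n] :
    Subgroup.closure (Set.range fun i : ι => ofAdd (Pi.single i 1 : ι → ZMod n)) = ⊤ := by
  refine Subgroup.eq_top_iff' _ |>.mpr fun a => ?_
  have hsum : ∏ i, ofAdd (Pi.single i (toAdd a i)) = a := by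
    rw [← ofAdd_sum, Finset.univ_sum_single, ofAdd_toAdd]
  rw [← hsum]
  refine Subgroup.prod_mem _ fun i _ => ?_
  have hpow : ofAdd (Pi.single i (toAdd a i)) =
      ofAdd (Pi.single i 1 : ι → ZMod n) ^ (toAdd a i).val := by
    rw [← ofAdd_nsmul, ← Pi.single_smul, nsmul_eq_mul, mul_one, ZMod.natCast_zmod_val]
  rw [hpow]
  exact Subgroup.pow_mem _ (Subgroup.subset_closure (Set.mem_range_self i)) _

theorem Group.card_le_rank_multiplicative_pi_zmod (ι : Type*) [Fintype ι] (p : ℕ) [Fact p.Prime] :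
    Fintype.card ι ≤ Group.rank (Multiplicative (ι → ZMod p)) := by
  classical
  have hexp (a : Multiplicative (ι → ZMod p)) : a ^ p = 1 := by
    rw [← toAdd_eq_zero, toAdd_pow]
    funext i
    simp
  have hcard := card_dvd_exponent_pow_rank' _ hexp
  rw [Nat.card_eq_fintype_card, Fintype.card_multiplicative, Fintype.card_pi, Finset.prod_const,
    ZMod.card, Finset.card_univ] at hcard
  exact (Nat.pow_dvd_pow_iff_le_right (Fact.out : p.Prime).one_lt).mp hcard

theorem FreeGroupBasis.card_le_rank_of_mem_range {G K ι : Type*} [Group G] [Group K] [Group.FG K]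
    (b : FreeGroupBasis ι G) (f : K →* G) (s : Finset ι) (hs : ∀ i ∈ s, b i ∈ f.range) :
    s.card ≤ Group.rank K := by
  classical
  let e (i : s) : Multiplicative (s → ZMod 2) := .ofAdd (Pi.single i 1)
  let φ : G →* Multiplicative (s → ZMod 2) := b.lift fun i => if h : i ∈ s then e ⟨i, h⟩ else 1
  have hsurj : Surjective (φ.comp f) := by
    rw [← MonoidHom.range_eq_top, eq_top_iff, ← Multiplicative.closure_range_ofAdd_single_one 2,
      Subgroup.closure_le]
    rintro _ ⟨i, rfl⟩
    obtain ⟨k, hk⟩ := hs i i.2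
    exact ⟨k, by simp [φ, e, hk]⟩
  calc s.card = Fintype.card s := (Fintype.card_coe s).symm
    _ ≤ Group.rank (Multiplicative (s → ZMod 2)) := Group.card_le_rank_multiplicative_pi_zmod s 2
    _ ≤ Group.rank K := Group.rank_le_of_surjective _ hsurj

theorem strict_chain_unbounded_rank {α : Type*}
    (H : ℕ → Subgroup (FreeGroup α)) (hmono : StrictMono H)
    [∀ i, Group.FG (H i)] :
    ∀ r : ℕ, ∃ i, r < Group.rank (H i) := by
  intro r
  by_contra! hr
  let L := ⨆ i, H i
  let b := IsFreeGroup.basis L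
  have : Infinite (IsFreeGroup.Generators L) := not_finite_iff_infinite.mp fun _ =>
    Subgroup.not_fg_iSup_of_strictMono hmono <| (Group.fg_iff_subgroup_fg L).mp <|
      Group.fg_of_surjective (f := b.repr.symm.toMonoidHom) b.repr.symm.surjective
  obtain ⟨s, hs⟩ := Infinite.exists_subset_card_eq (IsFreeGroup.Generators L) (r + 1)
  obtain ⟨N, hN⟩ := Subgroup.exists_subset_of_directed_of_subset_iSup hmono.monotone.directed_le
    (s.finite_toSet.image fun i => (b i : FreeGroup α)) (by rintro _ ⟨i, -, rfl⟩; exact (b i).2)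
  have hbN : ∀ i ∈ s, b i ∈ (Subgroup.inclusion (le_iSup H N)).range :=
    fun i hi => ⟨⟨b i, hN ⟨i, hi, rfl⟩⟩, rfl⟩
  have hcard : r + 1 ≤ Group.rank (H N) := hs ▸ b.card_le_rank_of_mem_range _ s hbN
  exact (hr N).not_gt hcard
end

section
/- Let F be a free group and H ≤ F finitely generated of rank n. For any finite sequence of elements f₁,…,f_k ∈ F and positive integers m₁,…,m_k such that, setting H₀ = H and H_j = ⟨H_{j-1}, f_j⟩, one has f_j ≠ 1 and f_j^{m_j} ∈ H_{j-1} for each j, the rank of H_k is at most n. -/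
/-!
Adjoining to `H` an element `g` with `g ^ m ∈ H`, `m ≠ 0`, does not raise the rank. By
Nielsen–Schreier `K = ⟨H, g⟩` is free, so its rank is the `ℤ`-rank of its abelianization.
That abelianization is spanned by the images of a minimal generating set `S` of `H` together
with the class of `g`, and `m` times that class lies in the span of the image of `S`. So the
quotient by this span is torsion, and the rank of `K` is at most `|S| = rank H`. Iterating
gives the theorem.
-/

open Cardinal

open Submodule in
theorem Module.rank_le_of_span_insert_eq_top_of_smul_mem {R M : Type*} [CommRing R] [IsDomain R]
    [AddCommGroup M] [Module R M] {s : Set M} {x : M} {c : R} (hc : c ≠ 0)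
    (hspan : span R (insert x s) = ⊤) (hcx : c • x ∈ span R s) :
    Module.rank R M ≤ #s := by
  have htorsion : Module.rank R (M ⧸ span R s) = 0 := by
    refine rank_eq_zero_iff.mpr fun y ↦ ?_
    obtain ⟨y, rfl⟩ := Submodule.Quotient.mk_surjective _ y
    obtain ⟨a, z, hz, rfl⟩ := mem_span_insert.mp (hspan ▸ mem_top : y ∈ span R (insert x s))
    refine ⟨c, hc, ?_⟩
    rw [← Submodule.Quotient.mk_smul, Submodule.Quotient.mk_eq_zero, smul_add, smul_comm]
    exact add_mem (smul_mem _ a hcx) (smul_mem _ c hz)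
  calc Module.rank R M = Module.rank R (span R s) := by
        rw [← rank_quotient_add_rank_of_isDomain (span R s), htorsion, zero_add]
    _ ≤ #s := rank_span_le s

namespace Abelianization

open Submodule

variable {G : Type*} [Group G]

theorem ofMul_of_mem_span_of_mem_closure {S : Set G} {x : G} (hx : x ∈ Subgroup.closure S) :
    Additive.ofMul (of x) ∈ span ℤ ((fun y ↦ Additive.ofMul (of y)) '' S) := by
  induction hx using Subgroup.closure_induction with
  | mem y hy => exact subset_span ⟨y, hy, rfl⟩
  | one => simp
  | mul y z _ _ hy hz => simpa using add_mem hy hz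
  | inv y _ hy => simpa using neg_mem hy

theorem span_ofMul_of_eq_top {S : Set G} (hS : Subgroup.closure S = ⊤) :
    span ℤ ((fun y ↦ Additive.ofMul (of y)) '' S) = ⊤ := by
  refine eq_top_iff.mpr fun a _ ↦ ?_
  obtain ⟨x, rfl⟩ := QuotientGroup.mk_surjective (Additive.toMul a)
  exact ofMul_of_mem_span_of_mem_closure (hS ▸ Subgroup.mem_top x)

end Abelianization

namespace IsFreeGroup

variable {G : Type*} [Group G] [IsFreeGroup G]

theorem rank_additive_abelianization :
    Module.rank ℤ (Additive (Abelianization G)) = #(Generators G) :=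
  (Module.Basis.mk_eq_rank'' <| (FreeAbelianGroup.basis _).map
    (MulEquiv.toAdditive (toFreeGroup G).abelianizationCongr).toIntLinearEquiv.symm).symm

theorem card_generators_le_of_zpow_mem_closure {S : Set G} {g : G} {m : ℤ} (hm : m ≠ 0)
    (hgen : Subgroup.closure (insert g S) = ⊤) (hroot : g ^ m ∈ Subgroup.closure S) :
    #(Generators G) ≤ #S := by
  set q : G → Additive (Abelianization G) := fun y ↦ Additive.ofMul (Abelianization.of y)
  have hspan : Submodule.span ℤ (insert (q g) (q '' S)) = ⊤ := by
    rw [← Set.image_insert_eq]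
    exact Abelianization.span_ofMul_of_eq_top hgen
  have hroot' : m • q g ∈ Submodule.span ℤ (q '' S) := by
    simpa [q] using Abelianization.ofMul_of_mem_span_of_mem_closure hroot
  calc #(Generators G) = Module.rank ℤ (Additive (Abelianization G)) :=
        rank_additive_abelianization.symm
    _ ≤ #(q '' S) := Module.rank_le_of_span_insert_eq_top_of_smul_mem hm hspan hroot'
    _ ≤ #S := mk_image_le

theorem rank_le_of_card_generators_le [Group.FG G] {r : ℕ} (h : #(Generators G) ≤ r) :
    Group.rank G ≤ r := by
  classical
  have : Finite (Generators G) := lt_aleph0_iff_finite.mp (h.trans_lt natCast_lt_aleph0)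
  have := Fintype.ofFinite (Generators G)
  have hcard : Fintype.card (Generators G) ≤ r := by
    rwa [← Nat.cast_le (α := Cardinal), ← mk_fintype]
  rw [Group.rank_congr (toFreeGroup G)]
  refine (Group.rank_le (S := Finset.univ.image FreeGroup.of) ?_).trans
    (Finset.card_image_le.trans hcard)
  rw [Finset.coe_image, Finset.coe_univ, Set.image_univ, FreeGroup.closure_range_of]

end IsFreeGroup

open Subgroup

instance Subgroup.fg_sup {G : Type*} [Group G] (H K : Subgroup G) [Group.FG H] [Group.FG K] :
    Group.FG ↥(H ⊔ K) := by
  rw [Group.fg_iff_subgroup_fg] at *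
  exact ‹H.FG›.sup ‹K.FG›

theorem Subgroup.exists_closure_eq_and_card_le_rank {G : Type*} [Group G] (H : Subgroup G)
    [Group.FG H] : ∃ S : Set G, closure S = H ∧ #S ≤ Group.rank H := by
  obtain ⟨S₀, hcard, hS₀⟩ := Group.rank_spec H
  refine ⟨H.subtype '' S₀, ?_, ?_⟩
  · rw [← MonoidHom.map_closure, hS₀, ← MonoidHom.range_eq_map, range_subtype]
  · exact mk_image_le.trans (by simp [hcard])

theorem IsFreeGroup.rank_sup_closure_singleton_le {F : Type*} [Group F] [IsFreeGroup F]
    (H : Subgroup F) [Group.FG H] {g : F} {m : ℤ} (hm : m ≠ 0) (hroot : g ^ m ∈ H) :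
    Group.rank ↥(H ⊔ closure {g}) ≤ Group.rank H := by
  set K := H ⊔ closure {g}
  obtain ⟨S, hSH, hS⟩ := H.exists_closure_eq_and_card_le_rank
  have hSK : S ⊆ Set.range K.subtype := by
    rw [coe_subtype, Subtype.range_coe]
    exact (hSH ▸ Subgroup.subset_closure : S ⊆ H).trans (le_sup_left : H ≤ K)
  set S' : Set K := K.subtype ⁻¹' S
  set g' : K := ⟨g, mem_sup_right (mem_closure_singleton_self g)⟩
  have hmap : (closure S').map K.subtype = H := by
    rw [MonoidHom.map_closure, Set.image_preimage_eq_of_subset hSK, hSH]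
  have hgen : closure (insert g' S') = ⊤ := by
    rw [eq_top_iff, ← map_subtype_le_map_subtype, MonoidHom.map_closure, Set.image_insert_eq,
      Set.image_preimage_eq_of_subset hSK, ← MonoidHom.range_eq_map, range_subtype]
    exact sup_le (hSH ▸ closure_mono (Set.subset_insert _ _)) (closure_mono (by simp [g']))
  have hroot' : g' ^ m ∈ closure S' := by
    rwa [← mem_map_iff_mem K.subtype_injective, hmap]
  exact IsFreeGroup.rank_le_of_card_generators_le <|
    (IsFreeGroup.card_generators_le_of_zpow_mem_closure hm hgen hroot').trans
      ((mk_preimage_of_injective _ _ K.subtype_injective).trans hS)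

theorem iterated_rank_le_general {α : Type*} (H : Subgroup (FreeGroup α))
    [Group.FG H] (n : ℕ) (hn : Group.rank H = n) (k : ℕ)
    (f : Fin k → FreeGroup α) (m : Fin k → ℕ)
    (Hc : Fin (k + 1) → Subgroup (FreeGroup α))
    (h0 : Hc 0 = H)
    (hstep : ∀ j : Fin k, Hc j.succ = Hc j.castSucc ⊔ Subgroup.closure {f j})
    (hm : ∀ j, 0 < m j)
    (hroot : ∀ j : Fin k, f j ^ m j ∈ Hc j.castSucc)
    [Group.FG (Hc (Fin.last k))] :
    Group.rank (Hc (Fin.last k)) ≤ n := by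
  have hfg (j : Fin (k + 1)) : Group.FG (Hc j) := by
    induction j using Fin.induction with
    | zero => rw [h0]; infer_instance
    | succ j ih => rw [hstep j]; infer_instance
  have hrank (j : Fin (k + 1)) : Group.rank (Hc j) ≤ n := by
    induction j using Fin.induction with
    | zero => exact (Subgroup.rank_congr h0).trans_le hn.le
    | succ j ih =>
      calc Group.rank (Hc j.succ) = Group.rank ↥(Hc j.castSucc ⊔ closure {f j}) :=
            Subgroup.rank_congr (hstep j)
        _ ≤ Group.rank (Hc j.castSucc) :=
            IsFreeGroup.rank_sup_closure_singleton_le _ (m := m j) (mod_cast (hm j).ne')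
              (by rw [zpow_natCast]; exact hroot j)
        _ ≤ n := ih
  exact hrank (Fin.last k)

theorem iterated_rank_le {α : Type*} (H : Subgroup (FreeGroup α))
    [Group.FG H] (n : ℕ) (hn : Group.rank H = n) (k : ℕ)
    (f : Fin k → FreeGroup α) (m : Fin k → ℕ)
    (Hc : Fin (k + 1) → Subgroup (FreeGroup α))
    (h0 : Hc 0 = H)
    (hstep : ∀ j : Fin k, Hc j.succ = Hc j.castSucc ⊔ Subgroup.closure {f j})
    (hf : ∀ j, f j ≠ 1) (hm : ∀ j, 0 < m j)
    (hroot : ∀ j : Fin k, f j ^ m j ∈ Hc j.castSucc)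
    [Group.FG (Hc (Fin.last k))] :
    Group.rank (Hc (Fin.last k)) ≤ n :=
  iterated_rank_le_general H n hn k f m Hc h0 hstep hm hroot
end
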